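/- arXiv:2211.00916 — 2 statements merged into one kernel-verified Lean document; each statement's English description precedes it below -/
import Mathlib

section
/- (Perturbed Kepler: persistence of radial velocity) Let $z : [t_1,t_2] \to \mathbb{C} \setminus \{0\}$ be a $C^2$ solution of $\ddot z = -m z/|z|^3 + F(z,t)$ where $m > 0$ and $F$ is continuous with $|F(x,t)| \le C/|x|^2$ for all $|x| \ge R$ and some constants $C, R > 0$. Write $r(t) = |z(t)|$. If $r(t) \ge R$ for all $t \in [t_1,t_2]$, $r(t_1) \ge R$, and $\dot r(t_1) \ge \sqrt{3(m+C)/r(t_1)} > 0$, then $\dot r(t) > \frac{1}{2}\dot r(t_1)$ for all $t \in [t_1,t_2]$. -/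
open scoped RealInnerProductSpace

/-- Perturbed Kepler: persistence of radial velocity: for a `C²` solution
`z` of `z̈ = -m z/|z|³ + F(z,t)` with `|F(x,t)| ≤ C/|x|²` for `|x| ≥ R`, staying in the
region `|z| ≥ R`, if `ṙ(t₁) ≥ √(3(m+C)/r(t₁))` then `ṙ(t) > ṙ(t₁)/2` on `[t₁,t₂]`.
Here `r(t) = |z(t)|` and `r'` is its derivative. -/
theorem stmt_5 (m C R t1 t2 : ℝ) (hm : 0 < m) (hC : 0 < C) (hR : 0 < R)
    (ht : t1 ≤ t2)
    (F : ℂ → ℝ → ℂ) (hFcont : Continuous fun p : ℂ × ℝ => F p.1 p.2)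
    (hF : ∀ x : ℂ, ∀ t : ℝ, R ≤ ‖x‖ → ‖F x t‖ ≤ C / ‖x‖^2)
    (z z' z'' : ℝ → ℂ) (r' : ℝ → ℝ)
    (hz : ∀ t ∈ Set.Icc t1 t2, z t ≠ 0)
    (hd1 : ∀ t ∈ Set.Icc t1 t2, HasDerivAt z (z' t) t)
    (hd2 : ∀ t ∈ Set.Icc t1 t2, HasDerivAt z' (z'' t) t)
    (hode : ∀ t ∈ Set.Icc t1 t2, z'' t = -(m / ‖z t‖^3) • z t + F (z t) t)
    (hr : ∀ t ∈ Set.Icc t1 t2, HasDerivAt (fun s => ‖z s‖) (r' t) t)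
    (hrR : ∀ t ∈ Set.Icc t1 t2, R ≤ ‖z t‖)
    (hr1 : Real.sqrt (3*(m+C)/‖z t1‖) ≤ r' t1) :
    ∀ t ∈ Set.Icc t1 t2, r' t1 / 2 < r' t := by
  by_contra hcon
  push_neg at hcon
  obtain ⟨τ, hτ, hτle⟩ := hcon
  set I : Set ℝ := Set.Icc t1 t2 with hI
  have hρpos : ∀ t ∈ I, (0:ℝ) < ‖z t‖ := fun t htI => lt_of_lt_of_le hR (hrR t htI)
  have hmc : (0:ℝ) < m + C := by linarith
  set φ : ℝ → ℝ := fun t => ⟪z t, z' t⟫ / ‖z t‖ with hφdef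
  -- φ is the derivative of the norm
  have hnorm : ∀ t ∈ I, HasDerivAt (fun s => ‖z s‖) (φ t) t := by
    intro t htI
    have hρ := hρpos t htI
    have h1 : HasDerivAt (fun s => ‖z s‖ ^ 2) (2 * ⟪z t, z' t⟫) t := (hd1 t htI).norm_sq
    have hne : ‖z t‖ ^ 2 ≠ 0 := by positivity
    have h2 := h1.sqrt hne
    have h3 : (fun s => Real.sqrt (‖z s‖ ^ 2)) = fun s => ‖z s‖ := by
      funext s; rw [Real.sqrt_sq (norm_nonneg _)]
    rw [h3] at h2
    convert h2 using 1
    rw [Real.sqrt_sq (norm_nonneg _)]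
    ring
  have hr'eq : ∀ t ∈ I, r' t = φ t := fun t htI => (hr t htI).unique (hnorm t htI)
  -- lower bound on ⟪z, F⟫
  have hzF : ∀ t ∈ I, -(C / ‖z t‖) ≤ ⟪z t, F (z t) t⟫ := by
    intro t htI
    have hρ := hρpos t htI
    have h1 : |⟪z t, F (z t) t⟫| ≤ ‖z t‖ * ‖F (z t) t‖ := abs_real_inner_le_norm _ _
    have h2 : ‖F (z t) t‖ ≤ C / ‖z t‖^2 := hF _ _ (hrR t htI)
    have h3 : ‖z t‖ * (C / ‖z t‖^2) = C / ‖z t‖ := by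
      rw [pow_two, ← div_div, mul_comm, div_mul_cancel₀ _ (ne_of_gt hρ)]
    nlinarith [neg_abs_le ⟪z t, F (z t) t⟫, norm_nonneg (z t)]
  -- lower bound on ⟪z, z''⟫
  have hzz'' : ∀ t ∈ I, -((m + C) / ‖z t‖) ≤ ⟪z t, z'' t⟫ := by
    intro t htI
    have hρ := hρpos t htI
    have hF' := hzF t htI
    rw [hode t htI, inner_add_right, real_inner_smul_right, real_inner_self_eq_norm_sq]
    have key : -(m / ‖z t‖^3) * ‖z t‖^2 = -(m/‖z t‖) := by
      have h3 : ‖z t‖^3 = ‖z t‖ * ‖z t‖^2 := by ring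
      rw [h3, neg_mul, ← div_div, div_mul_cancel₀ _ (by positivity : ‖z t‖^2 ≠ 0)]
    have hsplit : (m+C)/‖z t‖ = m/‖z t‖ + C/‖z t‖ := add_div _ _ _
    rw [key]
    linarith
  -- derivative of φ
  set D : ℝ → ℝ := fun t =>
    ((⟪z t, z'' t⟫ + ‖z' t‖^2) * ‖z t‖ - ⟪z t, z' t⟫ * φ t) / ‖z t‖^2 with hDdef
  have hφd : ∀ t ∈ I, HasDerivAt φ (D t) t := by
    intro t htI
    have hN : HasDerivAt (fun s => ⟪z s, z' s⟫) (⟪z t, z'' t⟫ + ‖z' t‖^2) t := by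
      have h := (hd1 t htI).inner ℝ (hd2 t htI)
      rwa [real_inner_self_eq_norm_sq] at h
    exact hN.div (hnorm t htI) (ne_of_gt (hρpos t htI))
  -- key differential inequality: D + (m+C)/ρ² ≥ 0
  have hkey : ∀ t ∈ I, 0 ≤ D t + (m+C) / ‖z t‖^2 := by
    intro t htI
    have hρ := hρpos t htI
    have h1 := hzz'' t htI
    have h2 : |⟪z t, z' t⟫| ≤ ‖z t‖ * ‖z' t‖ := abs_real_inner_le_norm _ _
    have hφρ : ⟪z t, z' t⟫ = φ t * ‖z t‖ :=
      (div_mul_cancel₀ _ (ne_of_gt hρ)).symm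
    have hsq : ⟪z t, z' t⟫^2 ≤ ‖z t‖^2 * ‖z' t‖^2 := by
      nlinarith [sq_abs ⟪z t, z' t⟫, abs_nonneg ⟪z t, z' t⟫, norm_nonneg (z t),
        norm_nonneg (z' t)]
    have hφ2 : φ t ^ 2 ≤ ‖z' t‖ ^ 2 := by
      have hsq2 := hsq
      rw [hφρ] at hsq2
      nlinarith [hsq2, mul_pos hρ hρ]
    have h3 : (m+C)/‖z t‖ * ‖z t‖ = m + C := div_mul_cancel₀ _ (ne_of_gt hρ)
    rw [hDdef]
    rw [← add_div, le_div_iff₀ (by positivity)]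
    have h4 : -((m+C)/‖z t‖) * ‖z t‖ ≤ ⟪z t, z'' t⟫ * ‖z t‖ :=
      mul_le_mul_of_nonneg_right h1 hρ.le
    have h5 : φ t ^ 2 * ‖z t‖ ≤ ‖z' t‖^2 * ‖z t‖ :=
      mul_le_mul_of_nonneg_right hφ2 hρ.le
    nlinarith [h4, h5, h3, hφρ]
  -- the energy-like function G
  set G : ℝ → ℝ := fun t => φ t^2/2 - (m+C)/‖z t‖ with hGdef
  have hGd : ∀ t ∈ I, HasDerivAt G (φ t * D t + (m+C) * φ t / ‖z t‖ ^ 2) t := by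
    intro t htI
    have h1 : HasDerivAt (fun s => φ s ^ 2 / 2) (φ t * D t) t := by
      have h := ((hφd t htI).pow 2).div_const 2
      refine h.congr_deriv ?_
      simp
      ring
    have h2 : HasDerivAt (fun s => (m+C)/‖z s‖) ((0 * ‖z t‖ - (m+C) * φ t) / ‖z t‖^2) t :=
      (hasDerivAt_const t (m+C)).div (hnorm t htI) (ne_of_gt (hρpos t htI))
    have h := h1.sub h2
    refine h.congr_deriv ?_
    ring
  -- continuity
  have hzc : ContinuousOn z I := fun t htI => (hd1 t htI).continuousAt.continuousWithinAt
  have hz'c : ContinuousOn z' I := fun t htI => (hd2 t htI).continuousAt.continuousWithinAt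
  have hρne : ∀ t ∈ I, ‖z t‖ ≠ 0 := fun t htI => ne_of_gt (hρpos t htI)
  have hφc : ContinuousOn φ I := (hzc.inner hz'c).div hzc.norm hρne
  have hGc : ContinuousOn G I :=
    ((hφc.pow 2).div_const 2).sub (continuousOn_const.div hzc.norm hρne)
  -- basic facts at t1
  have ht1I : t1 ∈ I := Set.left_mem_Icc.mpr ht
  have hρ1 : 0 < ‖z t1‖ := hρpos t1 ht1I
  set b := r' t1 with hb
  have hbpos : 0 < b := lt_of_lt_of_le (Real.sqrt_pos.mpr (by positivity)) hr1
  have hb2 : 3*(m+C)/‖z t1‖ ≤ b^2 := by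
    nlinarith [Real.sq_sqrt (show (0:ℝ) ≤ 3*(m+C)/‖z t1‖ by positivity), hr1,
      Real.sqrt_nonneg (3*(m+C)/‖z t1‖)]
  have hφ1 : φ t1 = b := (hr'eq t1 ht1I).symm
  -- the first time φ drops to b/2
  set S : Set ℝ := {s | s ∈ I ∧ φ s ≤ b/2} with hS
  have hSne : S.Nonempty := ⟨τ, hτ, by rw [← hr'eq τ hτ]; exact hτle⟩
  have hSbdd : BddBelow S := ⟨t1, fun s hs => hs.1.1⟩
  have hSclosed : IsClosed S := by
    have heq : S = I ∩ φ ⁻¹' Set.Iic (b/2) := rfl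
    rw [heq]
    exact hφc.preimage_isClosed_of_isClosed isClosed_Icc isClosed_Iic
  set T := sInf S with hT
  have hTS : T ∈ S := hSclosed.csInf_mem hSne hSbdd
  have hTI : T ∈ I := hTS.1
  have hTle : φ T ≤ b/2 := hTS.2
  have ht1T : t1 < T := by
    rcases lt_or_eq_of_le hTI.1 with h | h
    · exact h
    · exfalso
      rw [← h] at hTle
      rw [hφ1] at hTle
      linarith
  have hlow : ∀ s ∈ Set.Ico t1 T, b/2 < φ s := by
    intro s hs
    by_contra hle
    push_neg at hle
    have hsI : s ∈ I := ⟨hs.1, le_trans hs.2.le hTI.2⟩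
    exact absurd (csInf_le hSbdd ⟨hsI, hle⟩) (not_le.mpr hs.2)
  have hTge : b/2 ≤ φ T := by
    have hcw : ContinuousWithinAt φ (Set.Ico t1 T) T :=
      (hφc T hTI).mono (fun s hs => ⟨hs.1, le_trans hs.2.le hTI.2⟩)
    have hnb : (nhdsWithin T (Set.Ico t1 T)).NeBot := by
      rw [← mem_closure_iff_nhdsWithin_neBot, closure_Ico (ne_of_lt ht1T)]
      exact Set.right_mem_Icc.mpr ht1T.le
    exact ge_of_tendsto hcw (eventually_mem_nhdsWithin.mono fun s hs => (hlow s hs).le)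
  -- G is monotone on [t1, T]
  have hsub : Set.Icc t1 T ⊆ I := Set.Icc_subset_Icc le_rfl hTI.2
  have hmono : MonotoneOn G (Set.Icc t1 T) := by
    apply monotoneOn_of_deriv_nonneg (convex_Icc t1 T) (hGc.mono hsub)
    · intro x hx
      rw [interior_Icc] at hx
      exact ((hGd x (hsub (Set.mem_Icc_of_Ioo hx))).differentiableAt).differentiableWithinAt
    · intro x hx
      rw [interior_Icc] at hx
      have hxI : x ∈ I := hsub (Set.mem_Icc_of_Ioo hx)
      rw [(hGd x hxI).deriv]
      have hφpos : 0 < φ x := lt_trans (by linarith) (hlow x ⟨hx.1.le, hx.2⟩)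
      have hk := hkey x hxI
      have hrw : φ x * D x + (m+C) * φ x / ‖z x‖^2 = φ x * (D x + (m+C)/‖z x‖^2) := by
        ring
      rw [hrw]
      exact mul_nonneg hφpos.le hk
  -- final contradiction
  have hG1T : G t1 ≤ G T :=
    hmono (Set.left_mem_Icc.mpr ht1T.le) (Set.right_mem_Icc.mpr ht1T.le) ht1T.le
  have hφT : φ T = b/2 := le_antisymm hTle hTge
  have hρT : 0 < ‖z T‖ := hρpos T hTI
  have h1 : (0:ℝ) < (m+C)/‖z T‖ := by positivity
  have h2 : (m+C)/‖z t1‖ ≤ b^2/3 := by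
    rw [mul_div_assoc] at hb2
    linarith
  have hG1 : G t1 = b^2/2 - (m+C)/‖z t1‖ := by rw [hGdef]; simp [hφ1]
  have hGT : G T = (b/2)^2/2 - (m+C)/‖z T‖ := by rw [hGdef]; simp [hφT]
  rw [hG1, hGT] at hG1T
  nlinarith [hG1T, h1, h2, sq_nonneg b, hbpos]
end

section
/- (Perturbed Kepler: convergence of the angle) Let $z : [t_1,\infty) \to \mathbb{C}\setminus\{0\}$ be a $C^2$ solution of $\ddot z = -m z/|z|^3 + F(z,t)$ with $|F(x,t)| \le C/|x|^3$ for $|x| \ge R$. Write $z(t) = r(t)e^{i\theta(t)}$ with continuous $\theta$. If $r(t_1) \ge R$ and $\dot r(t) \ge v_0 > 0$ for all $t \ge t_1$, then $\theta(t)$ converges to a finite limit $\theta_0$ as $t \to \infty$; moreover for all $t > t_1$, $|\theta(t) - \theta(t_1)| \le \frac{|\omega(t_1)|}{v_0 r(t_1)} + \frac{C}{v_0^2 r(t_1)^2}$, where $\omega = z \wedge \dot z$. -/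
open Filter

/-- Comparison lemma: `|f b - f a| ≤ K/(vρ) - K/(v(ρ+v(b-a)))` when
`|f'| ≤ K/(ρ+v(·-a))²` on `[a,∞)`. -/
lemma stmt_7_bound_aux {f f' : ℝ → ℝ} {a K ρ v : ℝ} (hρ : 0 < ρ) (hv : 0 < v)
    (hf : ContinuousOn f (Set.Ici a))
    (hf' : ∀ u ∈ Set.Ici a, HasDerivWithinAt f (f' u) (Set.Ici u) u)
    (hbound : ∀ u ∈ Set.Ici a, |f' u| ≤ K / (ρ + v * (u - a)) ^ 2) :
    ∀ b, a ≤ b → |f b - f a| ≤ K / (v * ρ) - K / (v * (ρ + v * (b - a))) := by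
  intro b hb
  set B : ℝ → ℝ := fun u => K / (v * ρ) - K / (v * (ρ + v * (u - a))) with hBdef
  have hpos : ∀ u, a ≤ u → 0 < ρ + v * (u - a) := fun u hu => by nlinarith
  have hB' : ∀ u ∈ Set.Ico a b, HasDerivAt B (K / (ρ + v * (u - a)) ^ 2) u := by
    intro u hu
    have h1 : HasDerivAt (fun u : ℝ => ρ + v * (u - a)) v u := by
      simpa using ((hasDerivAt_id u).sub_const a |>.const_mul v).const_add ρ
    have h2 : HasDerivAt (fun u : ℝ => v * (ρ + v * (u - a))) (v * v) u := h1.const_mul v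
    have hne : v * (ρ + v * (u - a)) ≠ 0 := by
      have := hpos u hu.1; positivity
    have h3 : HasDerivAt (fun u : ℝ => K / (v * (ρ + v * (u - a))))
        (-(K * (v * v)) / (v * (ρ + v * (u - a))) ^ 2) u := by
      simpa [Pi.div_def] using (hasDerivAt_const u K).div h2 hne
    have h4 : HasDerivAt B _ u := (hasDerivAt_const u (K / (v * ρ))).sub h3
    convert h4 using 1
    have := hpos u hu.1
    field_simp
    ring
  have key := image_norm_le_of_norm_deriv_right_le_deriv_boundary'
    (f := fun u => f u - f a) (f' := f') (a := a) (b := b)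
    ((hf.sub continuousOn_const).mono Set.Icc_subset_Ici_self)
    (fun u hu => (hf' u hu.1).sub_const (f a))
    (B := B) (B' := fun u => K / (ρ + v * (u - a)) ^ 2)
    (by simp [hBdef])
    (by
      apply continuousOn_const.sub
      apply continuousOn_const.div
      · fun_prop
      · intro u hu
        have := hpos u hu.1; positivity)
    (fun u hu => (hB' u hu).hasDerivWithinAt)
    (fun u hu => by simpa [Real.norm_eq_abs] using hbound u hu.1)
  simpa [Real.norm_eq_abs] using key ⟨hb, le_rfl⟩

/-- Differentiability of a continuous polar-angle lift. -/
lemma stmt_7_theta_deriv {t1 : ℝ} {z z' : ℝ → ℂ} {r θ : ℝ → ℝ}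
    (hz : ∀ t, t1 ≤ t → z t ≠ 0)
    (hd1 : ∀ t, t1 ≤ t → HasDerivAt z (z' t) t)
    (hrnorm : ∀ t, t1 ≤ t → r t = ‖z t‖)
    (hpolar : ∀ t, t1 ≤ t → z t = (r t : ℂ) * Complex.exp ((θ t : ℂ) * Complex.I))
    (hθcont : ContinuousOn θ (Set.Ici t1))
    {t : ℝ} (ht : t1 ≤ t) :
    HasDerivWithinAt θ
      (((z t).re * (z' t).im - (z t).im * (z' t).re) / (r t) ^ 2) (Set.Ici t1) t := by
  have hzt := hz t ht
  set φ : ℝ → ℝ := fun s => (Complex.log (z s / z t)).im with hφdef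
  -- derivative of φ
  have hw : HasDerivAt (fun s => z s / z t) (z' t / z t) t := (hd1 t ht).div_const _
  have hwt : z t / z t = 1 := div_self hzt
  have hmem : z t / z t ∈ Complex.slitPlane := by
    rw [hwt]; exact Complex.one_mem_slitPlane
  have hlog : HasDerivAt (fun s => Complex.log (z s / z t)) (z' t / z t) t := by
    have h := (Complex.hasDerivAt_log hmem).comp t hw
    simpa [hwt, Function.comp_def] using h
  have hφ : HasDerivAt φ ((z' t / z t).im) t :=
    Complex.imCLM.hasFDerivAt.comp_hasDerivAt t hlog
  -- the derivative value
  have hval : (z' t / z t).im = ((z t).re * (z' t).im - (z t).im * (z' t).re) / (r t) ^ 2 := by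
    rw [Complex.div_im, hrnorm t ht,
      show ‖z t‖ ^ 2 = Complex.normSq (z t) by rw [Complex.sq_norm]]
    ring
  rw [← hval]
  -- θ is locally θ t + φ
  set g : ℝ → ℝ := fun s => θ s - θ t - φ s with hgdef
  have hφt : φ t = 0 := by simp [hφdef, hwt]
  have hgt : g t = 0 := by simp [hgdef, hφt]
  have hgc : ContinuousWithinAt g (Set.Ici t1) t := by
    apply ((hθcont t ht).sub continuousWithinAt_const).sub
    apply ContinuousAt.continuousWithinAt
    have hwc : ContinuousAt (fun x => z x / z t) t := (hd1 t ht).continuousAt.div_const _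
    have hlc : ContinuousAt (fun x => Complex.log (z x / z t)) t := hwc.clog hmem
    exact Complex.continuous_im.continuousAt.comp hlc
  have hsmall : ∀ᶠ s in nhdsWithin t (Set.Ici t1), |g s| < 2 * Real.pi := by
    have h2π : (0:ℝ) < 2 * Real.pi := by positivity
    have hmemnhds : {x : ℝ | |x| < 2 * Real.pi} ∈ nhds (g t) := by
      rw [hgt]
      exact (isOpen_Iio.preimage _root_.continuous_abs).mem_nhds
        (show |(0:ℝ)| < 2 * Real.pi by rwa [abs_zero])
    exact hgc hmemnhds
  have hkey : ∀ s, t1 ≤ s → |g s| < 2 * Real.pi → θ s = θ t + φ s := by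
    intro s hs habs
    have hzs := hz s hs
    have hrs : (0:ℝ) < r s := by rw [hrnorm s hs]; exact norm_pos_iff.2 hzs
    have hrt : (0:ℝ) < r t := by rw [hrnorm t ht]; exact norm_pos_iff.2 hzt
    set w : ℂ := z s / z t with hwdef
    have hw0 : w ≠ 0 := div_ne_zero hzs hzt
    have habsw : (‖w‖ : ℂ) = (r s : ℂ) / (r t : ℂ) := by
      rw [hwdef, norm_div, hrnorm s hs, hrnorm t ht]
      push_cast
      ring
    -- exp(φ s * I) = w / |w|
    have hexpφ : Complex.exp ((φ s : ℂ) * Complex.I) = w / (‖w‖ : ℂ) := by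
      have h1 : Complex.exp (Complex.log w) = w := Complex.exp_log hw0
      have h2 : Complex.log w = ((Complex.log w).re : ℂ) + ((Complex.log w).im : ℂ) * Complex.I :=
        (Complex.re_add_im _).symm
      have h3 : Complex.exp (((Complex.log w).re : ℂ)) = (‖w‖ : ℂ) := by
        rw [← Complex.ofReal_exp, Complex.log_re, Real.exp_log (norm_pos_iff.mpr hw0)]
      have h4 : w = (‖w‖ : ℂ) * Complex.exp (((Complex.log w).im : ℂ) * Complex.I) := by
        conv_lhs => rw [← h1, h2, Complex.exp_add, h3]
      have habs0 : (‖w‖ : ℂ) ≠ 0 := by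
        simpa using (norm_ne_zero_iff.mpr hw0)
      rw [hφdef]
      field_simp [h4.symm]
      rw [mul_comm]
      exact h4.symm
    have hexps : Complex.exp ((θ s : ℂ) * Complex.I) = z s / (r s : ℂ) := by
      rw [hpolar s hs]
      have : ((r s : ℂ)) ≠ 0 := by exact_mod_cast hrs.ne'
      field_simp
    have hexpt : Complex.exp ((θ t : ℂ) * Complex.I) = z t / (r t : ℂ) := by
      rw [hpolar t ht]
      have : ((r t : ℂ)) ≠ 0 := by exact_mod_cast hrt.ne'
      field_simp
    have hexpg : Complex.exp ((g s : ℂ) * Complex.I) = 1 := by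
      have hexpand : ((g s : ℂ)) * Complex.I
          = (θ s : ℂ) * Complex.I - (θ t : ℂ) * Complex.I - (φ s : ℂ) * Complex.I := by
        rw [hgdef]; push_cast; ring
      rw [hexpand, Complex.exp_sub, Complex.exp_sub, hexps, hexpt, hexpφ, habsw]
      have h1 : ((r s : ℂ)) ≠ 0 := by exact_mod_cast hrs.ne'
      have h2 : ((r t : ℂ)) ≠ 0 := by exact_mod_cast hrt.ne'
      rw [hwdef]
      field_simp
    obtain ⟨n, hn⟩ := Complex.exp_eq_one_iff.mp hexpg
    have hngs : g s = n * (2 * Real.pi) := by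
      have : ((g s : ℂ)) = (n : ℂ) * (2 * Real.pi) := by
        apply mul_right_cancel₀ Complex.I_ne_zero
        rw [hn]; ring
      exact_mod_cast this
    have hn0 : n = 0 := by
      by_contra h
      have h1 : (1:ℝ) ≤ |(n:ℝ)| := by
        exact_mod_cast Int.one_le_abs (by exact_mod_cast h)
      rw [hngs, abs_mul] at habs
      have h2π : (0:ℝ) < 2 * Real.pi := by positivity
      rw [abs_of_pos h2π] at habs
      nlinarith
    have hg0 : g s = 0 := by rw [hngs, hn0]; simp
    have hsub : θ s - θ t - φ s = 0 := hg0
    linarith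
  have hEq : θ =ᶠ[nhdsWithin t (Set.Ici t1)] fun s => θ t + φ s := by
    filter_upwards [hsmall, self_mem_nhdsWithin] with s h1 h2
    exact hkey s h2 h1
  have hder : HasDerivWithinAt (fun s => θ t + φ s) ((z' t / z t).im) (Set.Ici t1) t :=
    ((hφ.const_add (θ t)).hasDerivWithinAt)
  exact hder.congr_of_eventuallyEq hEq (by simp [hφt])

/-- Perturbed Kepler: convergence of the angle: for a `C²` solution of
`z̈ = -m z/|z|³ + F(z,t)` on `[t₁,∞)` with `|F(x,t)| ≤ C/|x|³` for `|x| ≥ R`, written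
in polar coordinates `z = r e^{iθ}` with continuous `θ`, if `r(t₁) ≥ R` and `ṙ ≥ v₀ > 0`,
then `θ(t)` converges as `t → ∞` and `|θ(t) - θ(t₁)| ≤ |ω(t₁)|/(v₀ r(t₁)) + C/(v₀² r(t₁)²)`,
where `ω = z ∧ ż`. -/
theorem stmt_7 (m C R v0 t1 : ℝ) (hC : 0 < C) (hR : 0 < R) (hv0 : 0 < v0)
    (F : ℂ → ℝ → ℂ)
    (hF : ∀ x : ℂ, ∀ t : ℝ, R ≤ ‖x‖ → ‖F x t‖ ≤ C / ‖x‖^3)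
    (z z' z'' : ℝ → ℂ) (r θ r' : ℝ → ℝ)
    (hz : ∀ t, t1 ≤ t → z t ≠ 0)
    (hd1 : ∀ t, t1 ≤ t → HasDerivAt z (z' t) t)
    (hd2 : ∀ t, t1 ≤ t → HasDerivAt z' (z'' t) t)
    (hode : ∀ t, t1 ≤ t → z'' t = -(m / ‖z t‖^3) • z t + F (z t) t)
    (hrnorm : ∀ t, t1 ≤ t → r t = ‖z t‖)
    (hpolar : ∀ t, t1 ≤ t → z t = (r t : ℂ) * Complex.exp ((θ t : ℂ) * Complex.I))
    (hθcont : ContinuousOn θ (Set.Ici t1))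
    (hr : ∀ t, t1 ≤ t → HasDerivAt r (r' t) t)
    (hr1 : R ≤ r t1)
    (hrdot : ∀ t, t1 ≤ t → v0 ≤ r' t) :
    (∃ θ0 : ℝ, Tendsto θ atTop (nhds θ0)) ∧
    ∀ t, t1 < t →
      |θ t - θ t1| ≤ |(z t1).re * (z' t1).im - (z t1).im * (z' t1).re| / (v0 * r t1)
        + C / (v0^2 * (r t1)^2) := by
  have hr1pos : 0 < r t1 := lt_of_lt_of_le hR hr1
  -- lower bound on r from any base point
  have rlow : ∀ t, t1 ≤ t → ∀ s, t ≤ s → r t + v0 * (s - t) ≤ r s := by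
    have hmono : MonotoneOn (fun u => r u - v0 * u) (Set.Ici t1) := by
      apply monotoneOn_of_deriv_nonneg (convex_Ici t1)
      · exact fun u hu => ((hr u hu).continuousAt.continuousWithinAt).sub
          (continuousWithinAt_const.mul continuousWithinAt_id)
      · intro u hu
        rw [interior_Ici] at hu
        exact ((hr u hu.le).sub
          ((hasDerivAt_id' (x := u)).const_mul v0)).differentiableAt.differentiableWithinAt
      · intro u hu
        rw [interior_Ici] at hu
        rw [HasDerivAt.deriv (f := fun u => r u - v0 * u) ((hr u hu.le).sub ((hasDerivAt_id' (x := u)).const_mul v0))]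
        have := hrdot u hu.le
        linarith
    intro t ht s hs
    have := hmono (Set.mem_Ici.2 ht) (Set.mem_Ici.2 (ht.trans hs)) hs
    simp only at this
    nlinarith
  have rpos : ∀ s, t1 ≤ s → 0 < r s := by
    intro s hs
    have := rlow t1 le_rfl s hs
    nlinarith
  have hRs : ∀ s, t1 ≤ s → R ≤ ‖z s‖ := by
    intro s hs
    rw [← hrnorm s hs]
    have := rlow t1 le_rfl s hs
    nlinarith
  set ω : ℝ → ℝ := fun s => (z s).re * (z' s).im - (z s).im * (z' s).re with hωdef
  -- derivative of the angular momentum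
  have hωd : ∀ s, t1 ≤ s →
      HasDerivAt ω ((z s).re * (z'' s).im - (z s).im * (z'' s).re) s := by
    intro s hs
    have hre : HasDerivAt (fun u => (z u).re) ((z' s).re) s :=
      Complex.reCLM.hasFDerivAt.comp_hasDerivAt s (hd1 s hs)
    have him : HasDerivAt (fun u => (z u).im) ((z' s).im) s :=
      Complex.imCLM.hasFDerivAt.comp_hasDerivAt s (hd1 s hs)
    have hre' : HasDerivAt (fun u => (z' u).re) ((z'' s).re) s :=
      Complex.reCLM.hasFDerivAt.comp_hasDerivAt s (hd2 s hs)
    have him' : HasDerivAt (fun u => (z' u).im) ((z'' s).im) s :=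
      Complex.imCLM.hasFDerivAt.comp_hasDerivAt s (hd2 s hs)
    have h : HasDerivAt ω _ s := (hre.mul him').sub (him.mul hre')
    convert h using 1
    ring
  -- bound on the derivative of ω
  have hω'b : ∀ s, t1 ≤ s →
      |(z s).re * (z'' s).im - (z s).im * (z'' s).re|
        ≤ C / (r t1 + v0 * (s - t1)) ^ 2 := by
    intro s hs
    have hzs := hz s hs
    have hnorm : (0:ℝ) < ‖z s‖ := norm_pos_iff.2 hzs
    have hval : (z s).re * (z'' s).im - (z s).im * (z'' s).re
        = ((starRingEnd ℂ) (z s) * F (z s) s).im := by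
      rw [hode s hs]
      simp only [Complex.mul_im, Complex.conj_re, Complex.conj_im, Complex.add_im,
        Complex.add_re, Complex.smul_im, Complex.smul_re, smul_eq_mul]
      ring
    have h1 : r t1 + v0 * (s - t1) ≤ r s := rlow t1 le_rfl s hs
    have h2 : 0 < r t1 + v0 * (s - t1) := by nlinarith
    rw [hval]
    calc |((starRingEnd ℂ) (z s) * F (z s) s).im|
        ≤ ‖(starRingEnd ℂ) (z s) * F (z s) s‖ := Complex.abs_im_le_norm _
      _ = ‖z s‖ * ‖F (z s) s‖ := by rw [norm_mul, Complex.norm_conj]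
      _ ≤ ‖z s‖ * (C / ‖z s‖^3) := by
          have := hF (z s) s (hRs s hs)
          nlinarith
      _ = C / ‖z s‖^2 := by
          rw [← mul_div_assoc, show ‖z s‖^3 = ‖z s‖ * ‖z s‖^2 by ring,
            mul_div_mul_left _ _ hnorm.ne']
      _ = C / (r s)^2 := by rw [hrnorm s hs]
      _ ≤ C / (r t1 + v0 * (s - t1)) ^ 2 := by gcongr
  -- bound on ω
  have hωbound : ∀ s, t1 ≤ s → |ω s| ≤ |ω t1| + C / (v0 * r t1) := by
    intro s hs
    have key := stmt_7_bound_aux (f := ω)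
        (f' := fun u => (z u).re * (z'' u).im - (z u).im * (z'' u).re)
        hr1pos hv0
        (fun u hu => (hωd u hu).continuousAt.continuousWithinAt)
        (fun u hu => (hωd u hu).hasDerivWithinAt)
        (fun u hu => hω'b u hu) s hs
    have h2 : 0 ≤ C / (v0 * (r t1 + v0 * (s - t1))) := by
      have := rpos s hs
      have h3 : 0 < r t1 + v0 * (s - t1) := by nlinarith
      positivity
    have h4 := abs_sub_abs_le_abs_sub (ω s) (ω t1)
    linarith
  set K := |ω t1| + C / (v0 * r t1) with hKdef
  have hK0 : 0 ≤ K := by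
    rw [hKdef]
    positivity
  -- derivative of θ
  have hθd : ∀ s, t1 ≤ s → HasDerivWithinAt θ (ω s / (r s)^2) (Set.Ici t1) s :=
    fun s hs => stmt_7_theta_deriv hz hd1 hrnorm hpolar hθcont hs
  -- bound on θ increments from any base point
  have hθbound : ∀ t, t1 ≤ t → ∀ s, t ≤ s → |θ s - θ t| ≤ K / (v0 * r t) := by
    intro t ht s hs
    have hrt : 0 < r t := rpos t ht
    have key := stmt_7_bound_aux (f := θ) (f' := fun u => ω u / (r u)^2)
        (a := t) (ρ := r t) (v := v0) (K := K) hrt hv0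
        (hθcont.mono (Set.Ici_subset_Ici.2 ht))
        (fun u hu => (hθd u (ht.trans hu)).mono (Set.Ici_subset_Ici.2 (ht.trans hu)))
        (by
          intro u hu
          have hu1 : t1 ≤ u := ht.trans hu
          have hru : 0 < r u := rpos u hu1
          have hut : t ≤ u := hu
          have hl : r t + v0 * (u - t) ≤ r u := rlow t ht u hu
          have hl0 : 0 < r t + v0 * (u - t) := by
            nlinarith [mul_nonneg hv0.le (sub_nonneg.2 hut)]
          rw [abs_div, abs_of_pos (by positivity : (0:ℝ) < (r u)^2)]
          calc |ω u| / (r u)^2 ≤ K / (r u)^2 := by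
                gcongr
                exact hωbound u hu1
            _ ≤ K / (r t + v0 * (u - t)) ^ 2 := by gcongr)
        s hs
    have h2 : 0 ≤ K / (v0 * (r t + v0 * (s - t))) := by
      have : 0 < r t + v0 * (s - t) := by
        nlinarith [mul_nonneg hv0.le (sub_nonneg.2 hs)]
      positivity
    linarith
  clear_value ω K
  constructor
  · -- convergence via the Cauchy criterion
    have hc : Cauchy (Filter.map θ atTop) := by
      rw [Metric.cauchy_iff]
      refine ⟨Filter.map_neBot, ?_⟩
      intro ε hε
      set T := t1 + (2 * K / (v0 * ε)) / v0 + 1 with hTdef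
      clear_value T
      have hT1 : t1 ≤ T := by
        have : 0 ≤ (2 * K / (v0 * ε)) / v0 := by positivity
        rw [hTdef]; linarith
      have hrT : 0 < r T := rpos T hT1
      have hrTb : r t1 + v0 * (T - t1) ≤ r T := rlow t1 le_rfl T hT1
      have hvT : 2 * K / ε + v0 * r t1 + v0 * v0 ≤ v0 * r T := by
        have hA : v0 * (v0 * (T - t1)) = 2 * K / ε + v0 * v0 := by
          rw [hTdef]; field_simp; ring
        have hmul : v0 * (r t1 + v0 * (T - t1)) ≤ v0 * r T :=
          mul_le_mul_of_nonneg_left hrTb hv0.le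
        have hexpand : v0 * (r t1 + v0 * (T - t1))
            = v0 * r t1 + v0 * (v0 * (T - t1)) := by ring
        linarith
      have hhalf : K / (v0 * r T) < ε / 2 := by
        rw [div_lt_iff₀ (by positivity)]
        have h5 : ε / 2 * (2 * K / ε) = K := by field_simp
        have h6 : 0 < ε / 2 * (v0 * r t1) := by positivity
        have h7 : 0 < ε / 2 * (v0 * v0) := by positivity
        have h8 : ε / 2 * (2 * K / ε + v0 * r t1 + v0 * v0)
            = ε / 2 * (2 * K / ε) + ε / 2 * (v0 * r t1) + ε / 2 * (v0 * v0) := by ring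
        have h9 := mul_le_mul_of_nonneg_left hvT (by positivity : (0:ℝ) ≤ ε / 2)
        linarith
      refine ⟨θ '' Set.Ici T, Filter.image_mem_map (Filter.Ici_mem_atTop T), ?_⟩
      rintro x ⟨a, ha, rfl⟩ y ⟨b, hb, rfl⟩
      rw [Real.dist_eq]
      have h1 := hθbound T hT1 a ha
      have h2 := hθbound T hT1 b hb
      calc |θ a - θ b| ≤ |θ a - θ T| + |θ T - θ b| := abs_sub_le _ _ _
        _ = |θ a - θ T| + |θ b - θ T| := by rw [abs_sub_comm (θ T)]
        _ < ε := by linarith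
    obtain ⟨x, hx⟩ := CompleteSpace.complete hc
    exact ⟨x, hx⟩
  · -- the quantitative bound
    intro t ht
    have h := hθbound t1 le_rfl t ht.le
    calc |θ t - θ t1| ≤ K / (v0 * r t1) := h
      _ = |(z t1).re * (z' t1).im - (z t1).im * (z' t1).re| / (v0 * r t1)
            + C / (v0^2 * (r t1)^2) := by
          rw [hKdef, hωdef]
          simp only
          field_simp
end
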